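/- arXiv:2203.10987 — 5 statements merged into one kernel-verified Lean document; each statement's English description precedes it below -/
import Mathlib

section
/- Let E be a directed graph. The operator (H,S) ↦ (H⊥, S⊥) on the set of admissible pairs of E is decreasing: if (H,S) ≤ (G,T) for admissible pairs (H,S) and (G,T), then (G⊥, T⊥) ≤ (H⊥, S⊥), i.e. G⊥ ⊆ H⊥ and T⊥ ⊆ H⊥ ∪ S⊥. -/
namespace GraphAnn

variable {V E : Type*}

/-- `u ≥ v`: there is a (possibly trivial) path from `u` to `v`. -/
def Reach (s r : E → V) : V → V → Prop :=
  Relation.ReflTransGen (fun a b => ∃ e, s e = a ∧ r e = b)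

/-- The root `R(W)` of a set of vertices. -/
def Root (s r : E → V) (W : Set V) : Set V :=
  {u | ∃ v ∈ W, Reach s r u v}

def Hereditary (s r : E → V) (H : Set V) : Prop :=
  ∀ u v, u ∈ H → Reach s r u v → v ∈ H

def IsSink (s : E → V) (v : V) : Prop := ∀ e : E, s e ≠ v

def IsInfiniteEmitter (s : E → V) (v : V) : Prop := {e : E | s e = v}.Infinite

def IsRegular (s : E → V) (v : V) : Prop := ¬ IsSink s v ∧ ¬ IsInfiniteEmitter s v

def Saturated (s r : E → V) (H : Set V) : Prop :=
  ∀ v, IsRegular s v → (∀ e : E, s e = v → r e ∈ H) → v ∈ H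

/-- `V⊥ = E⁰ − R(V)`. -/
def perp (s r : E → V) (W : Set V) : Set V := {v | v ∉ Root s r W}

/-- Breaking vertices `B_H`. -/
def Breaking (s r : E → V) (H : Set V) : Set V :=
  {v | v ∉ H ∧ IsInfiniteEmitter s v ∧
    {e : E | s e = v ∧ r e ∉ H}.Nonempty ∧ {e : E | s e = v ∧ r e ∉ H}.Finite}

/-- `(H,S)` is an admissible pair. -/
def Admissible (s r : E → V) (H S : Set V) : Prop :=
  Hereditary s r H ∧ Saturated s r H ∧ S ⊆ Breaking s r H

/-- `S⊥ = B_{H⊥} − S`. -/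
def Sperp (s r : E → V) (H S : Set V) : Set V := Breaking s r (perp s r H) \ S

/-- A cycle: a closed path of positive length in which distinct edges have
distinct sources. -/
structure GCycle (s r : E → V) where
  edges : List E
  ne : edges ≠ []
  chain : edges.Chain' (fun e f => r e = s f)
  closed : r (edges.getLast ne) = s (edges.head ne)
  srcNodup : (edges.map s).Nodup

/-- The vertex set `c⁰` of a cycle. -/
def GCycle.verts {s r : E → V} (c : GCycle s r) : Set V :=
  {v | ∃ e ∈ c.edges, s e = v}

/-- A cycle has an exit. -/
def GCycle.HasExit {s r : E → V} (c : GCycle s r) : Prop :=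
  ∃ e, s e ∈ c.verts ∧ e ∉ c.edges

/-- An extreme cycle: it has an exit and every exit returns. -/
def GCycle.Extreme {s r : E → V} (c : GCycle s r) : Prop :=
  c.HasExit ∧ ∀ v ∈ c.verts, ∀ w, Reach s r v w → ∃ u ∈ c.verts, Reach s r w u

/-- The vertex set `α⁰` of an infinite path `α`. -/
def InfPathVerts (s : E → V) (α : ℕ → E) : Set V := {v | ∃ n, s (α n) = v}

/-- Conditions (a), (b), (c): the graph is all-reflexive. -/
def AllReflexiveGraph (s r : E → V) : Prop :=
  (∀ c : GCycle s r, ¬ c.HasExit ∨ c.Extreme) ∧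
  (∀ v, IsInfiniteEmitter s v → ∃ c : GCycle s r, v ∈ c.verts) ∧
  (∀ α : ℕ → E, (∀ n, r (α n) = s (α (n + 1))) →
    {e : E | s e ∈ InfPathVerts s α ∧ r e ∉ Root s r (InfPathVerts s α)}.Finite)

/-!
A vertex `v ∈ T⊥` outside `H⊥` lies in `R(H)`. It is not in `G`: as `G` is hereditary, every edge
emitted by `v` would end in `R(G)`, contradicting that only finitely many of its infinitely many
edges do. Hence `v ∉ H` and `v ∉ S`, a path from `v` into `H` starts with an edge ending in `R(H)`,
and the edges of `v` ending in `R(H)` are among its finitely many edges ending in `R(G)`.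
-/

variable {s r : E → V}

theorem mem_root_of_mem {W : Set V} {v : V} (hv : v ∈ W) : v ∈ Root s r W :=
  ⟨v, hv, Relation.ReflTransGen.refl⟩

theorem root_mono {A B : Set V} (hAB : A ⊆ B) : Root s r A ⊆ Root s r B :=
  fun _ ⟨w, hw, hvw⟩ => ⟨w, hAB hw, hvw⟩

theorem perp_anti {A B : Set V} (hAB : A ⊆ B) : perp s r B ⊆ perp s r A :=
  fun _ hv hvA => hv (root_mono hAB hvA)

theorem exists_edge_range_mem_root {W : Set V} {v : V} (hv : v ∈ Root s r W) (hvW : v ∉ W) :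
    ∃ e, s e = v ∧ r e ∈ Root s r W := by
  obtain ⟨w, hwW, hvw⟩ := hv
  rcases Relation.ReflTransGen.cases_head hvw with rfl | ⟨_, ⟨e, hse, rfl⟩, hw⟩
  · exact absurd hwW hvW
  · exact ⟨e, hse, w, hwW, hw⟩

theorem Hereditary.notMem_of_mem_breaking_perp {G : Set V} (hG : Hereditary s r G) {v : V}
    (hv : v ∈ Breaking s r (perp s r G)) : v ∉ G := by
  intro hvG
  have hall : {e : E | s e = v} ⊆ {e : E | s e = v ∧ r e ∉ perp s r G} := fun e he =>
    ⟨he, not_not.2 (mem_root_of_mem (hG v (r e) hvG (.single ⟨e, he, rfl⟩)))⟩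
  exact hv.2.1 (hv.2.2.2.subset hall)

theorem mem_breaking_perp_of_subset {H G : Set V} (hHG : H ⊆ G) {v : V}
    (hvR : v ∈ Root s r H) (hvH : v ∉ H) (hv : v ∈ Breaking s r (perp s r G)) :
    v ∈ Breaking s r (perp s r H) := by
  obtain ⟨-, hinf, -, hfin⟩ := hv
  refine ⟨not_not.2 hvR, hinf, ?_, hfin.subset ?_⟩
  · obtain ⟨e, hse, hre⟩ := exists_edge_range_mem_root hvR hvH
    exact ⟨e, hse, not_not.2 hre⟩
  · exact fun e ⟨hse, hre⟩ => ⟨hse, fun hrG => hre (perp_anti hHG hrG)⟩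

theorem perp_decreasing_general (s r : E → V) (H S G T : Set V)
    (hGT : Admissible s r G T)
    (hHG : H ⊆ G) (hST : S ⊆ G ∪ T) :
    perp s r G ⊆ perp s r H ∧
      Sperp s r G T ⊆ perp s r H ∪ Sperp s r H S := by
  refine ⟨perp_anti hHG, fun v ⟨hvB, hvT⟩ => ?_⟩
  by_cases hvH : v ∈ perp s r H
  · exact .inl hvH
  have hvG : v ∉ G := hGT.1.notMem_of_mem_breaking_perp hvB
  refine .inr ⟨mem_breaking_perp_of_subset hHG (not_not.1 hvH) (fun h => hvG (hHG h)) hvB, ?_⟩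
  intro hvS
  rcases hST hvS with h | h
  exacts [hvG h, hvT h]

/-- The operator `(H,S) ↦ (H⊥, S⊥)` on admissible pairs is decreasing:
`(H,S) ≤ (G,T)` implies `(G⊥, T⊥) ≤ (H⊥, S⊥)`. -/
theorem perp_decreasing (s r : E → V) (H S G T : Set V)
    (hHS : Admissible s r H S) (hGT : Admissible s r G T)
    (hHG : H ⊆ G) (hST : S ⊆ G ∪ T) :
    perp s r G ⊆ perp s r H ∧
      Sperp s r G T ⊆ perp s r H ∪ Sperp s r H S :=
  perp_decreasing_general s r H S G T hGT hHG hST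

end GraphAnn
end

section
/- Let E be a directed graph and (H,S) an admissible pair of E such that H = H⊥⊥. Then S⊥⊥ = B_H. -/
namespace GraphAnn

variable {V E : Type*}

theorem subset_root (s r : E → V) (W : Set V) : W ⊆ Root s r W :=
  fun v hv => ⟨v, hv, Relation.ReflTransGen.refl⟩

theorem disjoint_perp (s r : E → V) (W : Set V) : Disjoint W (perp s r W) :=
  Set.disjoint_left.2 fun _ hv hperp => hperp (subset_root s r W hv)

/-- A vertex breaking for both `W` and `X` would emit only finitely many edges, as every edge
has its range outside `W` or outside `X`. -/
theorem disjoint_breaking_of_disjoint (s r : E → V) {W X : Set V} (hWX : Disjoint W X) :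
    Disjoint (Breaking s r W) (Breaking s r X) := by
  refine Set.disjoint_left.2 fun v ⟨_, hinf, _, hfinW⟩ ⟨_, _, _, hfinX⟩ => hinf ?_
  refine (hfinW.union hfinX).subset fun e he => ?_
  by_cases heW : r e ∈ W
  · exact Or.inr ⟨he, Set.disjoint_left.1 hWX heW⟩
  · exact Or.inl ⟨he, heW⟩

theorem disjoint_breaking_perp (s r : E → V) (W : Set V) :
    Disjoint (Breaking s r W) (Breaking s r (perp s r W)) :=
  disjoint_breaking_of_disjoint s r (disjoint_perp s r W)

theorem sperp_sperp_eq_breaking_general (s r : E → V) (H S : Set V)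
    (hH : H = perp s r (perp s r H)) :
    Sperp s r (perp s r H) (Sperp s r H S) = Breaking s r H := by
  show Breaking s r (perp s r (perp s r H)) \ (Breaking s r (perp s r H) \ S) = _
  rw [← hH]
  exact ((disjoint_breaking_perp s r H).mono_right Set.sdiff_subset).sdiff_eq_left

/-- If `(H,S)` is an admissible pair with `H = H⊥⊥`, then `S⊥⊥ = B_H`. -/
theorem sperp_sperp_eq_breaking (s r : E → V) (H S : Set V)
    (h : Admissible s r H S) (hH : H = perp s r (perp s r H)) :
    Sperp s r (perp s r H) (Sperp s r H S) = Breaking s r H :=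
  sperp_sperp_eq_breaking_general s r H S hH

end GraphAnn
end

section
/- Let E be a directed graph satisfying Condition (L) and let (H,S) be a reflexive admissible pair of E. Then every cycle c of E all of whose vertices lie in E⁰ − H has an exit e with r(e) ∉ H. (Since reflexivity forces S = B_H, the quotient graph E/(H,S) is the graph with vertex set E⁰ − H and edge set {e ∈ E¹ : r(e) ∉ H}, so this says that E/(H,S) satisfies Condition (L).) -/
namespace GraphAnn

variable {V E : Type*}

theorem _root_.List.IsChain.eq_getLast_or_exists_rel {α : Type*} {R : α → α → Prop}
    {l : List α} (hl : l.IsChain R) (hne : l ≠ []) {a : α} (ha : a ∈ l) :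
    a = l.getLast hne ∨ ∃ b ∈ l, R a b := by
  induction l using List.twoStepInduction with grind

section

variable {s r : E → V}

lemma reach_edge (e : E) : Reach s r (s e) (r e) :=
  .single ⟨e, rfl, rfl⟩

lemma hereditary_of_forall_edge {W : Set V} (hW : ∀ e, s e ∈ W → r e ∈ W) :
    Hereditary s r W := by
  intro u v hu huv
  induction huv with
  | refl => exact hu
  | tail _ hstep ih =>
    obtain ⟨e, rfl, rfl⟩ := hstep
    exact hW e ih

lemma mem_root_perp_of_not_mem {H : Set V} (hH : H = perp s r (perp s r H)) {v : V}
    (hv : v ∉ H) : v ∈ Root s r (perp s r H) := by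
  by_contra hroot
  exact hv (hH ▸ hroot)

namespace GCycle

variable (c : GCycle s r)

lemma head_mem_verts : s (c.edges.head c.ne) ∈ c.verts :=
  ⟨_, List.head_mem c.ne, rfl⟩

lemma range_mem_verts {e : E} (he : e ∈ c.edges) : r e ∈ c.verts := by
  rcases c.chain.eq_getLast_or_exists_rel c.ne he with rfl | ⟨f, hf, hef⟩
  · exact c.closed ▸ c.head_mem_verts
  · exact ⟨f, hf, hef.symm⟩

lemma reach_from_head {e : E} (he : e ∈ c.edges) : Reach s r (s (c.edges.head c.ne)) (s e) :=
  c.chain.induction (fun f => Reach s r (s (c.edges.head c.ne)) (s f)) c.edges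
    (fun _ _ hxy hx => hxy ▸ hx.trans (reach_edge _)) (fun _ => .refl) e he

lemma reach_to_getLast {e : E} (he : e ∈ c.edges) : Reach s r (s e) (r (c.edges.getLast c.ne)) :=
  c.chain.backwards_induction (fun f => Reach s r (s f) (r (c.edges.getLast c.ne))) c.edges
    (fun _ _ hxy hy => (reach_edge _).trans (hxy ▸ hy)) (fun _ => reach_edge _) e he

lemma reach_of_mem_verts {u w : V} (hu : u ∈ c.verts) (hw : w ∈ c.verts) : Reach s r u w := by
  obtain ⟨e, he, rfl⟩ := hu
  obtain ⟨f, hf, rfl⟩ := hw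
  exact (c.reach_to_getLast he).trans (c.closed ▸ c.reach_from_head hf)

variable {c}

lemma hereditary_verts_union {H : Set V} (hH : Hereditary s r H)
    (hexits : ∀ e, s e ∈ c.verts → e ∉ c.edges → r e ∈ H) : Hereditary s r (c.verts ∪ H) := by
  refine hereditary_of_forall_edge fun e hse => ?_
  rcases hse with hse | hse
  · by_cases he : e ∈ c.edges
    · exact Or.inl (c.range_mem_verts he)
    · exact Or.inr (hexits e hse he)
  · exact Or.inr (hH _ _ hse (reach_edge e))

/-- If every exit of `c` ran into `H`, then `c⁰ ∪ H` would be hereditary, and each of its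
vertices would reach `H` (on `c`, through the exit `e₀`), so none of them could reach `H⊥`. -/
lemma exists_exit_range_not_mem {H : Set V} (hH : Hereditary s r H) (hexit : c.HasExit)
    {v : V} (hv : v ∈ c.verts) (hvroot : v ∈ Root s r (perp s r H)) :
    ∃ e, s e ∈ c.verts ∧ e ∉ c.edges ∧ r e ∉ H := by
  by_contra! hexits
  obtain ⟨w, hw, hvw⟩ := hvroot
  obtain ⟨e₀, he₀, he₀c⟩ := hexit
  apply hw
  rcases hereditary_verts_union hH hexits v w (Or.inl hv) hvw with hwc | hwH
  · exact ⟨r e₀, hexits e₀ he₀ he₀c, (c.reach_of_mem_verts hwc he₀).trans (reach_edge e₀)⟩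
  · exact ⟨w, hwH, .refl⟩

end GCycle

end

/-- If `E` satisfies Condition (L) and `(H,S)` is a reflexive admissible pair,
then every cycle with vertices in `E⁰ − H` has an exit with range outside `H`
(i.e. the quotient graph `E/(H,S)` satisfies Condition (L)). -/
theorem quotient_condition_L (s r : E → V)
    (hL : ∀ c : GCycle s r, c.HasExit)
    (H S : Set V) (h : Admissible s r H S)
    (hrefl : H = perp s r (perp s r H) ∧
      S = Sperp s r (perp s r H) (Sperp s r H S))
    (c : GCycle s r) (hc : ∀ v ∈ c.verts, v ∉ H) :
    ∃ e, s e ∈ c.verts ∧ e ∉ c.edges ∧ r e ∉ H := by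
  have hv := c.head_mem_verts
  exact c.exists_exit_range_not_mem h.1 (hL c) hv (mem_root_perp_of_not_mem hrefl.1 (hc _ hv))

end GraphAnn
end

section
/- Let R be an associative ring with local units, i.e. for every r ∈ R there exists an idempotent u ∈ R with u r = r u = r. If I and J are two-sided ideals of R with I ∩ J = {0} and I + J = R, then J = ann(I) and ann(ann(I)) = I; in particular, every complemented ideal in the lattice of two-sided ideals of R is an annihilator ideal. -/
/-!
Since `I * J` and `J * I` lie in `I ∩ J = 0`, we get `J ⊆ ann(I)`. Conversely, `I ∩ ann(I) = 0`:
for `a` in it take `u` with `u * a = a` and split `u = a' + b'` along `I + J`; then `a' * a = 0`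
because `a ∈ ann(I)`, and `b' * a ∈ I ∩ J = 0`, so `a = u * a = 0`. Writing `r ∈ ann(I)` as
`a + b` with `a ∈ I`, `b ∈ J` gives `a = r - b ∈ I ∩ ann(I)`, hence `r = b ∈ J`. By symmetry
`ann(J) = I`, so `ann(ann(I)) = ann(J) = I`.
-/

/-- The annihilator of a subset of a ring:
`ann(I) = {r ∈ R : r x = 0 and x r = 0 for all x ∈ I}`. -/
def annSet {R : Type*} [NonUnitalRing R] (I : Set R) : Set R :=
  {a | ∀ x ∈ I, a * x = 0 ∧ x * a = 0}

section

variable {R : Type*} [NonUnitalRing R]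

lemma sub_mem_annSet {S : Set R} {a b : R} (ha : a ∈ annSet S) (hb : b ∈ annSet S) :
    a - b ∈ annSet S := fun x hx =>
  ⟨by rw [sub_mul, (ha x hx).1, (hb x hx).1, sub_zero],
    by rw [mul_sub, (ha x hx).2, (hb x hx).2, sub_zero]⟩

variable {I J : TwoSidedIdeal R}

lemma eq_zero_of_mem_of_mem (hmeet : (I : Set R) ∩ (J : Set R) = {0}) {x : R}
    (hI : x ∈ I) (hJ : x ∈ J) : x = 0 := by
  have hx : x ∈ (I : Set R) ∩ (J : Set R) := ⟨hI, hJ⟩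
  rwa [hmeet] at hx

lemma coe_subset_annSet (hmeet : (I : Set R) ∩ (J : Set R) = {0}) :
    (J : Set R) ⊆ annSet (I : Set R) := by
  intro b hb x hx
  exact ⟨eq_zero_of_mem_of_mem hmeet (I.mul_mem_left _ _ hx) (J.mul_mem_right _ _ hb),
    eq_zero_of_mem_of_mem hmeet (I.mul_mem_right _ _ hx) (J.mul_mem_left _ _ hb)⟩

lemma eq_zero_of_mem_of_mem_annSet (hlu : ∀ x : R, ∃ u : R, u * x = x)
    (hmeet : (I : Set R) ∩ (J : Set R) = {0}) (hjoin : ∀ x : R, ∃ a ∈ I, ∃ b ∈ J, x = a + b)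
    {a : R} (ha : a ∈ I) (hann : a ∈ annSet (I : Set R)) : a = 0 := by
  obtain ⟨u, hua⟩ := hlu a
  obtain ⟨a', ha', b', hb', rfl⟩ := hjoin u
  have ha'a : a' * a = 0 := (hann a' ha').2
  have hb'a : b' * a = 0 :=
    eq_zero_of_mem_of_mem hmeet (I.mul_mem_left _ _ ha) (J.mul_mem_right _ _ hb')
  calc a = (a' + b') * a := hua.symm
    _ = 0 := by rw [add_mul, ha'a, hb'a, add_zero]

lemma coe_eq_annSet (hlu : ∀ x : R, ∃ u : R, u * x = x)
    (hmeet : (I : Set R) ∩ (J : Set R) = {0}) (hjoin : ∀ x : R, ∃ a ∈ I, ∃ b ∈ J, x = a + b) :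
    (J : Set R) = annSet (I : Set R) := by
  refine (coe_subset_annSet hmeet).antisymm fun r hr => ?_
  obtain ⟨a, ha, b, hb, rfl⟩ := hjoin r
  have hann : a ∈ annSet (I : Set R) := by
    simpa only [add_sub_cancel_right] using sub_mem_annSet hr (coe_subset_annSet hmeet hb)
  rw [eq_zero_of_mem_of_mem_annSet hlu hmeet hjoin ha hann, zero_add]
  exact hb

end

/-- In a ring with local units, if two-sided ideals satisfy `I ∩ J = {0}` and
`I + J = R`, then `J = ann(I)` and `ann(ann(I)) = I`; in particular, every
complemented ideal in the lattice of two-sided ideals is an annihilator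
ideal. -/
theorem complemented_ideal_is_annihilator {R : Type*} [NonUnitalRing R]
    (hlu : ∀ x : R, ∃ u : R, u * u = u ∧ u * x = x ∧ x * u = x)
    (I J : TwoSidedIdeal R)
    (hmeet : (I : Set R) ∩ (J : Set R) = {0})
    (hjoin : ∀ x : R, ∃ a ∈ I, ∃ b ∈ J, x = a + b) :
    (J : Set R) = annSet (I : Set R) ∧
      annSet (annSet (I : Set R)) = (I : Set R) := by
  have hlu' : ∀ x : R, ∃ u : R, u * x = x := fun x => (hlu x).imp fun _ hu => hu.2.1
  have hJ := coe_eq_annSet hlu' hmeet hjoin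
  have hI : (I : Set R) = annSet (J : Set R) :=
    coe_eq_annSet hlu' (by rwa [Set.inter_comm]) fun x => by
      obtain ⟨a, ha, b, hb, rfl⟩ := hjoin x
      exact ⟨b, hb, a, ha, add_comm a b⟩
  exact ⟨hJ, by rw [← hJ, ← hI]⟩
end

section
/- Let 𝕋 = {z ∈ ℂ : |z| = 1} be the unit circle and C(𝕋) the algebra of continuous complex-valued functions on 𝕋. For a closed subset K ⊆ 𝕋, the vanishing ideal I(K) is an annihilator ideal (i.e. ann(ann(I(K))) = I(K)) if and only if K equals the closure of its interior. -/
/-- The vanishing ideal `I(K)` of a subset `K` of the circle `𝕋`, as a subset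
of `C(𝕋)`. -/
def vanishIdeal (K : Set Circle) : Set C(Circle, ℂ) :=
  {f | ∀ x ∈ K, f x = 0}

/-- The annihilator of a set of functions in `C(𝕋)`. -/
def annC (I : Set C(Circle, ℂ)) : Set C(Circle, ℂ) :=
  {g | ∀ f ∈ I, g * f = 0}

/-!
Closed subsets of `𝕋` are separated from points by continuous functions, so `K ↦ I(K)` is an
order-reversing injection on closed sets, and `I(A) = I(closure A)` for every `A`. A function
kills `I(K)` exactly when it vanishes off `K`, so `ann(I(K)) = I(closure Kᶜ) = I((interior K)ᶜ)`
and, applying this twice, `ann(ann(I(K))) = I(closure (interior K))`.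
-/

open Set

theorem CompletelyRegularSpace.exists_continuousMap_eqOn_zero_ne_zero {X : Type*}
    [TopologicalSpace X] [CompletelyRegularSpace X] {A : Set X} (hA : IsClosed A) {x : X}
    (hx : x ∉ A) : ∃ f : C(X, ℂ), EqOn f 0 A ∧ f x ≠ 0 := by
  obtain ⟨u, hu, hux, huA⟩ := CompletelyRegularSpace.completely_regular x A hA hx
  refine ⟨⟨fun y => 1 - ((u y : ℝ) : ℂ), by fun_prop⟩, fun y hy => ?_, ?_⟩
  · simp [huA hy]
  · simp [hux]

section vanishIdeal

variable {K L : Set Circle}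

theorem vanishIdeal_subset_vanishIdeal_iff (hK : IsClosed K) :
    vanishIdeal K ⊆ vanishIdeal L ↔ L ⊆ K := by
  refine ⟨fun h x hxL => ?_, fun h f hf x hx => hf x (h hx)⟩
  by_contra hxK
  obtain ⟨f, hfK, hfx⟩ := CompletelyRegularSpace.exists_continuousMap_eqOn_zero_ne_zero hK hxK
  exact hfx (h hfK x hxL)

theorem vanishIdeal_inj (hK : IsClosed K) (hL : IsClosed L) :
    vanishIdeal K = vanishIdeal L ↔ K = L := by
  rw [subset_antisymm_iff, subset_antisymm_iff, vanishIdeal_subset_vanishIdeal_iff hK,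
    vanishIdeal_subset_vanishIdeal_iff hL, and_comm]

theorem vanishIdeal_closure (A : Set Circle) : vanishIdeal (closure A) = vanishIdeal A := by
  ext f
  refine ⟨fun hf x hx => hf x (subset_closure hx), fun hf => ?_⟩
  have hzero : closure A ⊆ f ⁻¹' {0} :=
    closure_minimal hf (isClosed_singleton.preimage f.continuous)
  exact fun x hx => hzero hx

theorem annC_vanishIdeal (hK : IsClosed K) : annC (vanishIdeal K) = vanishIdeal Kᶜ := by
  ext g
  constructor
  · intro hg x hx
    obtain ⟨f, hfK, hfx⟩ := CompletelyRegularSpace.exists_continuousMap_eqOn_zero_ne_zero hK hx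
    have hgfx : g x * f x = 0 := by simpa using congrArg (· x) (hg f hfK)
    exact (mul_eq_zero.mp hgfx).resolve_right hfx
  · intro hg f hf
    ext y
    by_cases hy : y ∈ K
    · simp [hf y hy]
    · simp [hg y hy]

end vanishIdeal

/-- For a closed `K ⊆ 𝕋`, the vanishing ideal `I(K)` is an annihilator ideal
iff `K` equals the closure of its interior. -/
theorem vanishIdeal_annihilator_iff (K : Set Circle) (hK : IsClosed K) :
    annC (annC (vanishIdeal K)) = vanishIdeal K ↔
      K = closure (interior K) := by
  have hann : annC (annC (vanishIdeal K)) = vanishIdeal (closure (interior K)) := by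
    rw [annC_vanishIdeal hK, ← vanishIdeal_closure Kᶜ, annC_vanishIdeal isClosed_closure,
      closure_compl, compl_compl, vanishIdeal_closure]
  rw [hann, vanishIdeal_inj isClosed_closure hK, eq_comm]
end
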